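/- arXiv:1405.3441 — 5 statements merged into one kernel-verified Lean document; each statement's English description precedes it below -/
import Mathlib

section
/- If a graph G has exactly 2 distinct adjacency eigenvalues, then G is a disjoint union of copies of a complete graph K_n for some n ≥ 2. -/
open Matrix SimpleGraph Finset

private lemma adjH {V : Type*} [Fintype V] [DecidableEq V] (G : SimpleGraph V)
    [DecidableRel G.Adj] : (G.adjMatrix ℝ).IsHermitian := by
  rw [Matrix.IsHermitian, Matrix.conjTranspose_eq_transpose_of_trivial]
  exact G.isSymm_adjMatrix

/-- If the eigenvalue set is `{l1, l2}`, the adjacency matrix satisfies the quadratic. -/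
private lemma quadratic {V : Type*} [Fintype V] [DecidableEq V] (G : SimpleGraph V)
    [DecidableRel G.Adj] {l1 l2 : ℝ}
    (hset : {μ : ℝ | ∃ x : V → ℝ, x ≠ 0 ∧ (G.adjMatrix ℝ).mulVec x = μ • x} = {l1, l2}) :
    G.adjMatrix ℝ * G.adjMatrix ℝ - (l1 + l2) • G.adjMatrix ℝ + (l1 * l2) • 1 = 0 := by
  set A := G.adjMatrix ℝ with hAdef
  have hA : A.IsHermitian := adjH G
  set B := A * A - (l1 + l2) • A + (l1 * l2) • 1 with hBdef
  -- basis of (V → ℝ) from the eigenvector basis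
  let b : Module.Basis V ℝ (V → ℝ) :=
    (hA.eigenvectorBasis.toBasis).map (WithLp.linearEquiv 2 ℝ (V → ℝ))
  have hb : ∀ i, b i = ⇑(hA.eigenvectorBasis i) := by
    intro i
    simp [b, Module.Basis.map_apply]
  have hmem : ∀ i : V, hA.eigenvalues i ∈ ({l1, l2} : Set ℝ) := by
    intro i
    rw [← hset]
    refine ⟨⇑(hA.eigenvectorBasis i), ?_, hA.mulVec_eigenvectorBasis i⟩
    have := hA.eigenvectorBasis.toBasis.ne_zero i
    intro hcon
    apply this
    ext j
    exact congrFun hcon j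
  have hquad : ∀ i : V, hA.eigenvalues i * hA.eigenvalues i
      - (l1 + l2) * hA.eigenvalues i + l1 * l2 = 0 := by
    intro i
    rcases hmem i with h | h <;> rw [h] <;> ring
  have hzero : Matrix.toLin' B = 0 := by
    apply b.ext
    intro i
    have hv := hA.mulVec_eigenvectorBasis i
    rw [hb i]
    simp only [Matrix.toLin'_apply, LinearMap.zero_apply, hBdef]
    rw [Matrix.add_mulVec, Matrix.sub_mulVec, Matrix.smul_mulVec,
      Matrix.smul_mulVec, Matrix.one_mulVec, ← Matrix.mulVec_mulVec, hv,
      Matrix.mulVec_smul, hv]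
    have := hquad i
    rw [smul_smul]
    rw [smul_smul]
    have : (hA.eigenvalues i * hA.eigenvalues i) • (⇑(hA.eigenvectorBasis i) : V → ℝ)
        - ((l1 + l2) * hA.eigenvalues i) • ⇑(hA.eigenvectorBasis i)
        + (l1 * l2) • ⇑(hA.eigenvectorBasis i)
        = (hA.eigenvalues i * hA.eigenvalues i - (l1 + l2) * hA.eigenvalues i + l1 * l2)
            • ⇑(hA.eigenvectorBasis i) := by
      rw [add_smul, sub_smul]
    rw [this, hquad i, zero_smul]
  exact LinearEquiv.injective Matrix.toLin' (by rw [hzero, map_zero])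

/-- A graph with exactly two distinct adjacency eigenvalues is a disjoint union of
copies of a complete graph `K_n` with `n ≥ 2`.  The disjoint union of `m` copies of
`K_n` is modelled as the graph on `Fin m × Fin n` where distinct vertices are
adjacent iff they share their first coordinate. -/
theorem two_eigenvalues_iff_union_cliques (V : Type*) [Fintype V] [DecidableEq V]
    (G : SimpleGraph V) [DecidableRel G.Adj]
    (h : {μ : ℝ | ∃ x : V → ℝ, x ≠ 0 ∧ (G.adjMatrix ℝ).mulVec x = μ • x}.ncard = 2) :
    ∃ (m n : ℕ), 2 ≤ n ∧
      Nonempty (G ≃g SimpleGraph.fromRel (fun a b : Fin m × Fin n => a.1 = b.1)) := by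
  obtain ⟨l1, l2, hne, hset⟩ := Set.ncard_eq_two.mp h
  have hB := quadratic G hset
  set A := G.adjMatrix ℝ with hAdef
  -- entrywise equation
  have hent : ∀ i j : V, (A * A) i j = (l1 + l2) * A i j
      - l1 * l2 * (if i = j then (1:ℝ) else 0) := by
    intro i j
    have := congrFun (congrFun hB i) j
    simp only [Matrix.add_apply, Matrix.sub_apply, Matrix.smul_apply, Matrix.one_apply,
      Matrix.zero_apply, smul_eq_mul] at this
    linarith [this]
  -- diagonal: degree is constant, equal to -(l1*l2)
  have hdeg : ∀ i : V, (G.degree i : ℝ) = -(l1 * l2) := by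
    intro i
    have h1 := hent i i
    rw [G.adjMatrix_mul_self_apply_self i] at h1
    have hAii : A i i = 0 := by simp [hAdef]
    rw [hAii, if_pos rfl] at h1
    linarith
  -- no common neighbours of non-adjacent distinct vertices
  have hcommon : ∀ i j : V, i ≠ j → ¬ G.Adj i j → ∀ u, ¬(G.Adj i u ∧ G.Adj u j) := by
    intro i j hij hnadj u hu
    have h1 := hent i j
    rw [G.adjMatrix_mul_apply] at h1
    have hAij : A i j = 0 := by simp [hAdef, hnadj]
    rw [hAij, if_neg hij] at h1
    have hsum : ∑ u ∈ G.neighborFinset i, A u j = 0 := by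
      rw [h1]; ring
    have hnn : ∀ u ∈ G.neighborFinset i, (0:ℝ) ≤ A u j := by
      intro u _
      simp only [hAdef, SimpleGraph.adjMatrix_apply]
      positivity
    have hzero := (Finset.sum_eq_zero_iff_of_nonneg hnn).mp hsum u
      ((G.mem_neighborFinset i u).mpr hu.1)
    rw [hAdef, SimpleGraph.adjMatrix_apply, if_pos hu.2] at hzero
    exact one_ne_zero hzero
  -- transitivity of `= ∨ Adj`
  have htrans : ∀ a b c : V, G.Adj a b → G.Adj b c → a = c ∨ G.Adj a c := by
    intro a b c hab hbc
    by_cases hac : a = c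
    · exact Or.inl hac
    · by_contra hcon
      push_neg at hcon
      exact hcommon a c hac hcon.2 b ⟨hab, hbc⟩
  -- V is nonempty
  have hV : Nonempty V := by
    have hl1 : l1 ∈ {μ : ℝ | ∃ x : V → ℝ, x ≠ 0 ∧ (G.adjMatrix ℝ).mulVec x = μ • x} := by
      rw [hset]; exact Or.inl rfl
    obtain ⟨x, hx0, -⟩ := hl1
    obtain ⟨i, -⟩ := Function.ne_iff.mp hx0
    exact ⟨i⟩
  obtain ⟨v0⟩ := hV
  set k := G.degree v0 with hkdef
  have hdegk : ∀ i : V, G.degree i = k := by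
    intro i
    have : (G.degree i : ℝ) = (k : ℝ) := by rw [hdeg i, hkdef, hdeg v0]
    exact_mod_cast this
  have hk1 : 1 ≤ k := by
    by_contra hk
    push_neg at hk
    have hk0 : k = 0 := by omega
    have hnoadj : ∀ a b : V, ¬ G.Adj a b := by
      intro a b hab
      have : 0 < G.degree a := (G.degree_pos_iff_exists_adj a).mpr ⟨b, hab⟩
      rw [hdegk a, hk0] at this
      exact lt_irrefl 0 this
    have hA0 : A = 0 := by
      ext i j
      simp [hAdef, hnoadj i j]
    have hl : ∀ μ ∈ ({l1, l2} : Set ℝ), μ = 0 := by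
      intro μ hμ
      rw [← hset] at hμ
      obtain ⟨x, hx0, hx⟩ := hμ
      rw [hA0, Matrix.zero_mulVec] at hx
      rcases smul_eq_zero.mp hx.symm with hh | hh
      · exact hh
      · exact absurd hh hx0
    exact hne ((hl l1 (Or.inl rfl)).trans (hl l2 (Or.inr rfl)).symm)
  -- the equivalence relation whose classes are the cliques
  letI s : Setoid V := ⟨fun a b => a = b ∨ G.Adj a b,
    ⟨fun a => Or.inl rfl,
     fun {a b} hab => by
       rcases hab with hh | hh
       · exact Or.inl hh.symm
       · exact Or.inr hh.symm,
     fun {a b c} hab hbc => by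
       rcases hab with hh | hh
       · rw [hh]; exact hbc
       · rcases hbc with hh2 | hh2
         · rw [← hh2]; exact Or.inr hh
         · exact htrans a b c hh hh2⟩⟩
  letI : DecidableRel ((· ≈ ·) : V → V → Prop) := fun a b =>
    inferInstanceAs (Decidable (a = b ∨ G.Adj a b))
  letI : DecidableEq (Quotient s) := fun x y => Quotient.recOnSubsingleton₂ x y
    (fun a b => decidable_of_iff (a ≈ b) (Quotient.eq (r := s)).symm)
  -- each class has n = k + 1 elements
  set n := k + 1 with hndef
  have hfib : ∀ c : Quotient s, Fintype.card {v : V // Quotient.mk s v = c} = n := by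
    intro c
    obtain ⟨a, rfl⟩ := Quotient.exists_rep c
    rw [Fintype.card_subtype]
    have hfe : Finset.univ.filter (fun v : V => Quotient.mk s v = Quotient.mk s a)
        = insert a (G.neighborFinset a) := by
      ext v
      simp only [Finset.mem_filter, Finset.mem_univ, true_and, Finset.mem_insert,
        G.mem_neighborFinset]
      rw [Quotient.eq]
      constructor
      · rintro (hh | hh)
        · exact Or.inl hh
        · exact Or.inr hh.symm
      · rintro (hh | hh)
        · exact Or.inl hh
        · exact Or.inr hh.symm
    rw [hfe, Finset.card_insert_of_notMem (by simp),
      G.card_neighborFinset_eq_degree, hdegk a]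
  -- build the isomorphism
  set m := Fintype.card (Quotient s) with hmdef
  let eQ : Quotient s ≃ Fin m := Fintype.equivFin _
  let fib : ∀ c : Quotient s, {v : V // Quotient.mk s v = c} ≃ Fin n :=
    fun c => Fintype.equivFinOfCardEq (hfib c)
  let e : V ≃ Fin m × Fin n :=
    (Equiv.sigmaFiberEquiv (Quotient.mk s)).symm.trans
      ((Equiv.sigmaCongrRight fib).trans
        ((Equiv.sigmaEquivProd (Quotient s) (Fin n)).trans
          (Equiv.prodCongr eQ (Equiv.refl (Fin n)))))
  have he1 : ∀ a : V, (e a).1 = eQ (Quotient.mk s a) := fun a => rfl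
  refine ⟨m, n, by omega, ⟨⟨e, ?_⟩⟩⟩
  intro a b
  rw [SimpleGraph.fromRel_adj]
  constructor
  · rintro ⟨hne', hfst⟩
    have hab : a ≠ b := fun hh => hne' (by rw [hh])
    have hq : Quotient.mk s a = Quotient.mk s b := by
      rcases hfst with hh | hh
      · exact eQ.injective (by rw [← he1 a, ← he1 b]; exact hh)
      · exact eQ.injective (by rw [← he1 a, ← he1 b]; exact hh.symm)
    rcases Quotient.exact hq with hh | hh
    · exact absurd hh hab
    · exact hh
  · intro hadj
    refine ⟨e.injective.ne (G.ne_of_adj hadj), Or.inl ?_⟩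
    rw [he1 a, he1 b]
    congr 1
    exact Quotient.sound (Or.inr hadj)
end

section
/- Fisher's inequality: a non-trivial (v,k,λ)-design with λ > 0 and k < v has at least v blocks. -/
open Finset Matrix

section aux
variable {v b k lam : ℕ} (hk : 2 ≤ k) (hkv : k < v) (hlam : 0 < lam)
  (D : Fin b → Finset (Fin v))
  (hsize : ∀ i, (D i).card = k)
  (hpairs : ∀ p q : Fin v, p ≠ q →
    (Finset.univ.filter fun i => p ∈ D i ∧ q ∈ D i).card = lam)

include hsize hpairs in
lemma repl_count (p : Fin v) :
    (Finset.univ.filter fun i => p ∈ D i).card * (k - 1) = lam * (v - 1) := by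
  have key : ∑ q ∈ Finset.univ.erase p,
      (Finset.univ.filter fun i => p ∈ D i ∧ q ∈ D i).card
      = ∑ i ∈ Finset.univ.filter (fun i => p ∈ D i), (k - 1) := by
    have swap : ∀ q : Fin v, (Finset.univ.filter fun i => p ∈ D i ∧ q ∈ D i).card
        = ∑ i : Fin b, (if p ∈ D i ∧ q ∈ D i then 1 else 0) := by
      intro q; rw [Finset.sum_boole]; simp
    rw [Finset.sum_congr rfl fun q _ => swap q, Finset.sum_comm]
    rw [Finset.sum_filter]
    refine Finset.sum_congr rfl fun i _ => ?_
    by_cases hp : p ∈ D i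
    · simp only [hp, true_and, if_true]
      have : ∑ q ∈ Finset.univ.erase p, (if q ∈ D i then 1 else 0)
          = ((Finset.univ.erase p).filter (· ∈ D i)).card := by
        rw [Finset.sum_boole]; simp
      rw [this]
      have : (Finset.univ.erase p).filter (· ∈ D i) = (D i).erase p := by
        ext q; simp [Finset.mem_erase, and_comm]
      rw [this, Finset.card_erase_of_mem hp, hsize]
    · simp [hp]
  have left : ∑ q ∈ Finset.univ.erase p,
      (Finset.univ.filter fun i => p ∈ D i ∧ q ∈ D i).card = lam * (v - 1) := by
    rw [Finset.sum_congr rfl fun q hq => hpairs p q (Ne.symm (Finset.mem_erase.1 hq).1)]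
    rw [Finset.sum_const, Finset.card_erase_of_mem (Finset.mem_univ p)]
    simp [mul_comm]
  rw [left, Finset.sum_const, smul_eq_mul] at key
  omega

end aux

/-- Fisher's inequality: a non-trivial `(v,k,λ)`-design with `λ > 0` and `k < v`
has at least `v` blocks. -/
theorem fisher_inequality (v b k lam : ℕ) (hk : 2 ≤ k) (hkv : k < v) (hlam : 0 < lam)
    (D : Fin b → Finset (Fin v))
    (hsize : ∀ i, (D i).card = k)
    (hpairs : ∀ p q : Fin v, p ≠ q →
      (Finset.univ.filter fun i => p ∈ D i ∧ q ∈ D i).card = lam) :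
    v ≤ b := by
  have hv : 0 < v := by omega
  -- replication number
  set r : ℕ := (Finset.univ.filter fun i => (⟨0, hv⟩ : Fin v) ∈ D i).card with hr
  have hrk : r * (k - 1) = lam * (v - 1) := repl_count D hsize hpairs _
  have hrall : ∀ p : Fin v, (Finset.univ.filter fun i => p ∈ D i).card = r := by
    intro p
    have := repl_count D hsize hpairs p
    have hk1 : 0 < k - 1 := by omega
    exact Nat.eq_of_mul_eq_mul_right hk1 (by omega)
  have hrlam : lam < r := by
    by_contra h
    push_neg at h
    have h1 : r * (k - 1) ≤ lam * (k - 1) := Nat.mul_le_mul_right _ h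
    rw [hrk] at h1
    have h2 := Nat.le_of_mul_le_mul_left h1 hlam
    omega
  -- incidence matrix
  set M : Matrix (Fin v) (Fin b) ℚ := Matrix.of fun p i => if p ∈ D i then 1 else 0 with hM
  have hMMT : ∀ p q : Fin v, (M * Mᵀ) p q =
      ((Finset.univ.filter fun i => p ∈ D i ∧ q ∈ D i).card : ℚ) := by
    intro p q
    simp only [Matrix.mul_apply, Matrix.transpose_apply, hM, Matrix.of_apply]
    rw [Finset.card_filter]
    push_cast
    refine Finset.sum_congr rfl fun i _ => ?_
    by_cases hp : p ∈ D i <;> by_cases hq : q ∈ D i <;> simp [hp, hq]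
  have hN : ∀ p q : Fin v, (M * Mᵀ) p q = if p = q then (r : ℚ) else (lam : ℚ) := by
    intro p q
    rw [hMMT]
    by_cases h : p = q
    · subst h
      simp only [if_pos rfl]
      norm_cast
      rw [← hrall p]
      congr 1
      apply Finset.filter_congr
      intro i _; simp
    · rw [if_neg h, hpairs p q h]
  -- injectivity of x ↦ Mᵀ *ᵥ x
  have hinj : Function.Injective (Mᵀ.mulVecLin) := by
    rw [← LinearMap.ker_eq_bot, LinearMap.ker_eq_bot']
    intro x hx
    have hNx : (M * Mᵀ) *ᵥ x = 0 := by
      rw [← Matrix.mulVec_mulVec]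
      simp only [Matrix.mulVecLin_apply] at hx
      rw [hx, Matrix.mulVec_zero]
    have hquad : x ⬝ᵥ ((M * Mᵀ) *ᵥ x) = 0 := by rw [hNx, dotProduct_zero]
    have hexpand : x ⬝ᵥ ((M * Mᵀ) *ᵥ x)
        = ((r : ℚ) - lam) * (∑ p, x p ^ 2) + (lam : ℚ) * (∑ p, x p) ^ 2 := by
      simp only [dotProduct, Matrix.mulVec, dotProduct]
      rw [Finset.sum_congr rfl fun p _ => by
        rw [Finset.sum_congr rfl fun q _ => by rw [hN p q]]]
      have : ∀ p : Fin v, x p * (∑ q, (if p = q then (r:ℚ) else lam) * x q)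
          = ((r:ℚ) - lam) * x p ^ 2 + lam * (x p * ∑ q, x q) := by
        intro p
        have : ∑ q, (if p = q then (r:ℚ) else lam) * x q
            = ((r:ℚ) - lam) * x p + lam * ∑ q, x q := by
          rw [Finset.sum_congr rfl fun q _ => by
            rw [show (if p = q then (r:ℚ) else lam) * x q
              = (if p = q then ((r:ℚ) - lam) * x q else 0) + lam * x q by
                by_cases h : p = q <;> simp [h]; ring]]
          rw [Finset.sum_add_distrib, Finset.sum_ite_eq, if_pos (Finset.mem_univ p),
            ← Finset.mul_sum]
        rw [this]; ring
      rw [Finset.sum_congr rfl fun p _ => this p, Finset.sum_add_distrib,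
        ← Finset.mul_sum, ← Finset.mul_sum, ← Finset.sum_mul]
      ring
    rw [hexpand] at hquad
    have hrl : (0:ℚ) < (r : ℚ) - lam := by
      have : (lam : ℚ) < r := by exact_mod_cast hrlam
      linarith
    have hsq : ∑ p, x p ^ 2 = 0 := by
      have h1 : (0:ℚ) ≤ ∑ p, x p ^ 2 := Finset.sum_nonneg fun p _ => sq_nonneg _
      have h2 : (0:ℚ) ≤ (lam : ℚ) * (∑ p, x p) ^ 2 := by positivity
      nlinarith
    funext p
    have := (Finset.sum_eq_zero_iff_of_nonneg (fun q _ => sq_nonneg (x q))).1 hsq p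
      (Finset.mem_univ p)
    have := pow_eq_zero_iff (n := 2) (by norm_num) |>.1 this
    simpa using this
  have := LinearMap.finrank_le_finrank_of_injective hinj
  simpa [Module.finrank_fin_fun] using this
end

section
/- A (v,k,λ)-design with λ > 0 and k < v is symmetric (b = v) if and only if any two distinct blocks intersect in exactly λ points. -/
open Matrix Finset

lemma aux_isUnit (n : ℕ) (a c : ℚ) (ha : a ≠ 0) (hac : a + n * c ≠ 0) :
    IsUnit (a • (1 : Matrix (Fin n) (Fin n) ℚ) + c • Matrix.of (fun _ _ => (1:ℚ))) := by
  have hJ : (Matrix.of (fun _ _ => (1:ℚ)) : Matrix (Fin n) (Fin n) ℚ)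
      = Matrix.replicateCol Unit (fun _ => (1:ℚ)) * Matrix.replicateRow Unit (fun _ => (1:ℚ)) := by
    ext i j
    simp [Matrix.mul_apply]
  rw [Matrix.isUnit_iff_isUnit_det, isUnit_iff_ne_zero]
  have : a • (1 : Matrix (Fin n) (Fin n) ℚ) + c • Matrix.of (fun _ _ => (1:ℚ))
      = a • (1 + Matrix.replicateCol Unit (fun _ => c/a) * Matrix.replicateRow Unit (fun _ => (1:ℚ))) := by
    rw [smul_add, hJ]
    congr 1
    ext i j
    simp [Matrix.mul_apply, Matrix.replicateCol, Matrix.replicateRow]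
    field_simp
  rw [this, Matrix.det_smul, Matrix.det_one_add_replicateCol_mul_replicateRow]
  have : ((fun _ : Fin n => (1:ℚ)) ⬝ᵥ (fun _ : Fin n => c/a) : ℚ) = n * (c/a) := by
    simp [dotProduct]
  rw [this]
  have h1 : (1 : ℚ) + n * (c/a) = (a + n*c)/a := by field_simp
  rw [h1]
  positivity

lemma aux_entry_NTN (v b : ℕ) (D : Fin b → Finset (Fin v)) (i j : Fin b) :
    (((Matrix.of fun p i => if p ∈ D i then (1:ℚ) else 0))ᵀ
      * (Matrix.of fun p i => if p ∈ D i then (1:ℚ) else 0)) i j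
      = ((D i ∩ D j).card : ℚ) := by
  rw [Matrix.mul_apply]
  have h : ∀ p : Fin v,
      ((Matrix.of fun p i => if p ∈ D i then (1:ℚ) else 0))ᵀ i p
        * (Matrix.of fun p i => if p ∈ D i then (1:ℚ) else 0) p j
      = if p ∈ D i ∩ D j then 1 else 0 := by
    intro p
    by_cases h1 : p ∈ D i <;> by_cases h2 : p ∈ D j <;>
      simp [Matrix.transpose_apply, h1, h2]
  simp_rw [h]
  rw [Finset.sum_boole]
  norm_cast
  congr 1
  ext q
  simp

lemma aux_entry_NNT (v b : ℕ) (D : Fin b → Finset (Fin v)) (p q : Fin v) :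
    ((Matrix.of fun p i => if p ∈ D i then (1:ℚ) else 0)
      * ((Matrix.of fun p i => if p ∈ D i then (1:ℚ) else 0))ᵀ) p q
      = ((Finset.univ.filter fun i => p ∈ D i ∧ q ∈ D i).card : ℚ) := by
  rw [Matrix.mul_apply]
  have h : ∀ i : Fin b,
      (Matrix.of fun p i => if p ∈ D i then (1:ℚ) else 0) p i
        * ((Matrix.of fun p i => if p ∈ D i then (1:ℚ) else 0))ᵀ i q
      = if p ∈ D i ∧ q ∈ D i then 1 else 0 := by
    intro i
    by_cases h1 : p ∈ D i <;> by_cases h2 : q ∈ D i <;>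
      simp [Matrix.transpose_apply, h1, h2]
  simp_rw [h]
  rw [Finset.sum_boole]

/-- A `(v,k,λ)`-design with `λ > 0` and `k < v` is symmetric (`b = v`) if and only if
any two distinct blocks intersect in exactly `λ` points. -/
theorem design_symmetric_iff (v b k lam : ℕ) (hk : 2 ≤ k) (hkv : k < v) (hlam : 0 < lam)
    (D : Fin b → Finset (Fin v))
    (hsize : ∀ i, (D i).card = k)
    (hpairs : ∀ p q : Fin v, p ≠ q →
      (Finset.univ.filter fun i => p ∈ D i ∧ q ∈ D i).card = lam) :
    b = v ↔ ∀ i j : Fin b, i ≠ j → (D i ∩ D j).card = lam := by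
  classical
  have hv3 : 3 ≤ v := by omega
  set Nm : Matrix (Fin v) (Fin b) ℚ := Matrix.of fun p i => if p ∈ D i then (1:ℚ) else 0
    with hNm
  -- replication numbers
  have hrep : ∀ p : Fin v,
      (Finset.univ.filter fun i => p ∈ D i).card * (k-1) = lam * (v-1) := by
    intro p
    have hLHS : ∑ q ∈ Finset.univ.erase p,
        (Finset.univ.filter fun i => p ∈ D i ∧ q ∈ D i).card = lam * (v - 1) := by
      rw [Finset.sum_congr rfl fun q hq => hpairs p q (Ne.symm (Finset.ne_of_mem_erase hq))]
      rw [Finset.sum_const, smul_eq_mul, Finset.card_erase_of_mem (Finset.mem_univ p),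
        Finset.card_univ, Fintype.card_fin, mul_comm]
    rw [← hLHS]
    have hswap : ∑ q ∈ Finset.univ.erase p,
        (Finset.univ.filter fun i => p ∈ D i ∧ q ∈ D i).card
        = ∑ i : Fin b, ∑ q ∈ Finset.univ.erase p, (if p ∈ D i ∧ q ∈ D i then 1 else 0) := by
      rw [Finset.sum_comm]
      refine Finset.sum_congr rfl fun q _ => ?_
      rw [Finset.card_filter]
    have hinner : ∀ i : Fin b,
        ∑ q ∈ Finset.univ.erase p, (if p ∈ D i ∧ q ∈ D i then 1 else 0)
        = if p ∈ D i then k - 1 else 0 := by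
      intro i
      by_cases hpD : p ∈ D i
      · simp only [hpD, true_and, if_true]
        rw [← Finset.card_filter]
        have : (Finset.univ.erase p).filter (fun q => q ∈ D i) = (D i).erase p := by
          ext q
          simp [Finset.mem_erase, and_comm]
        rw [this, Finset.card_erase_of_mem hpD, hsize]
      · simp [hpD]
    rw [hswap]
    simp_rw [hinner]
    rw [← Finset.sum_filter, Finset.sum_const, smul_eq_mul]
  -- constant replication
  set p0 : Fin v := ⟨0, by omega⟩ with hp0
  set r : ℕ := (Finset.univ.filter fun i => p0 ∈ D i).card with hrdef
  have hrp : ∀ p : Fin v, (Finset.univ.filter fun i => p ∈ D i).card = r := by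
    intro p
    have h1 := hrep p
    have h2 := hrep p0
    have hk1 : 0 < k - 1 := by omega
    rw [← h2] at h1
    exact Nat.eq_of_mul_eq_mul_right hk1 h1
  have hrk : r * (k-1) = lam * (v-1) := hrep p0
  have hlr : lam < r := by
    have h1 : lam * (k-1) < lam * (v-1) := by
      have hkv1 : k - 1 < v - 1 := by omega
      exact Nat.mul_lt_mul_of_pos_left hkv1 hlam
    rw [← hrk] at h1
    have := Nat.lt_of_mul_lt_mul_right h1
    exact this
  -- N * Nᵀ
  have hNNT : Nm * Nmᵀ = ((r:ℚ) - lam) • (1 : Matrix (Fin v) (Fin v) ℚ)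
      + (lam:ℚ) • Matrix.of (fun _ _ => (1:ℚ)) := by
    ext p q
    rw [hNm, aux_entry_NNT]
    by_cases hpq : p = q
    · subst hpq
      have : (Finset.univ.filter fun i => p ∈ D i ∧ p ∈ D i)
          = (Finset.univ.filter fun i => p ∈ D i) := by
        congr 1
        ext i
        simp
      rw [this, hrp p]
      simp [Matrix.one_apply]
    · rw [hpairs p q hpq]
      simp [Matrix.one_apply, hpq]
  have hUnit1 : IsUnit (Nm * Nmᵀ) := by
    rw [hNNT]
    apply aux_isUnit
    · have : (lam:ℚ) < r := by exact_mod_cast hlr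
      intro h
      nlinarith
    · have h1 : (lam:ℚ) < r := by exact_mod_cast hlr
      have h2 : (0:ℚ) ≤ (v:ℚ) * lam := by positivity
      nlinarith
  have hFisher : v ≤ b := by
    have h1 : (Nm * Nmᵀ).rank = v := by
      rw [Matrix.rank_of_isUnit _ hUnit1, Fintype.card_fin]
    have h2 : (Nm * Nmᵀ).rank ≤ Nm.rank := Matrix.rank_mul_le_left _ _
    have h3 : Nm.rank ≤ b := by
      have := Matrix.rank_le_card_width Nm
      simpa using this
    omega
  constructor
  · -- symmetric → intersections are lam
    intro hbv
    subst hbv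
    intro i j hij
    -- r = k
    have hbk : b * k = b * r := by
      have h1 : ∑ i : Fin b, (D i).card = b * k := by
        rw [Finset.sum_congr rfl fun i _ => hsize i]
        simp [mul_comm]
      have h2 : ∑ i : Fin b, (D i).card = b * r := by
        have h3 : ∀ i : Fin b, (D i).card = ∑ p : Fin b, (if p ∈ D i then 1 else 0) := by
          intro i
          rw [← Finset.card_filter]
          congr 1
          ext p
          simp
        rw [Finset.sum_congr rfl fun i _ => h3 i, Finset.sum_comm]
        have h4 : ∀ p : Fin b, ∑ i : Fin b, (if p ∈ D i then 1 else 0) = r := by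
          intro p
          rw [← Finset.card_filter, hrp p]
        rw [Finset.sum_congr rfl fun p _ => h4 p]
        simp [mul_comm]
      omega
    have hrk' : r = k := by
      have h5 : b * k = b * r := hbk
      have hb0 : 0 < b := by omega
      exact (Nat.eq_of_mul_eq_mul_left hb0 h5).symm
    set Jm : Matrix (Fin b) (Fin b) ℚ := Matrix.of (fun _ _ => (1:ℚ)) with hJm
    have hdetN : IsUnit Nm.det := by
      rw [Matrix.isUnit_iff_isUnit_det, Matrix.det_mul] at hUnit1
      exact isUnit_of_mul_isUnit_left hUnit1
    have hNi : Nm⁻¹ * Nm = 1 := Matrix.nonsing_inv_mul Nm hdetN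
    have hcomm : Jm * Nm = Nm * Jm := by
      ext p i
      have h1 : (Jm * Nm) p i = ((D i).card : ℚ) := by
        rw [Matrix.mul_apply]
        simp only [hJm, hNm, Matrix.of_apply, one_mul]
        rw [Finset.sum_boole]
        norm_cast
        congr 1
        ext q
        simp
      have h2 : (Nm * Jm) p i = (((Finset.univ.filter fun j => p ∈ D j).card : ℕ) : ℚ) := by
        rw [Matrix.mul_apply]
        simp only [hJm, hNm, Matrix.of_apply, mul_one]
        rw [Finset.sum_boole]
      rw [h1, h2, hsize, hrp, hrk']
    have hNTN : Nmᵀ * Nm = ((k:ℚ) - lam) • (1 : Matrix (Fin b) (Fin b) ℚ) + (lam:ℚ) • Jm := by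
      have key : Nm * (Nmᵀ * Nm) = Nm * (((k:ℚ) - lam) • (1 : Matrix (Fin b) (Fin b) ℚ)
          + (lam:ℚ) • Jm) := by
        rw [← Matrix.mul_assoc, hNNT, hrk']
        rw [Matrix.add_mul, Matrix.smul_mul, Matrix.one_mul, Matrix.smul_mul, hcomm,
          Matrix.mul_add, Matrix.mul_smul, Matrix.mul_one, Matrix.mul_smul]
      calc Nmᵀ * Nm = (Nm⁻¹ * Nm) * (Nmᵀ * Nm) := by rw [hNi, Matrix.one_mul]
        _ = Nm⁻¹ * (Nm * (Nmᵀ * Nm)) := by rw [Matrix.mul_assoc]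
        _ = Nm⁻¹ * (Nm * (((k:ℚ) - lam) • (1 : Matrix (Fin b) (Fin b) ℚ)
              + (lam:ℚ) • Jm)) := by rw [key]
        _ = (Nm⁻¹ * Nm) * (((k:ℚ) - lam) • (1 : Matrix (Fin b) (Fin b) ℚ)
              + (lam:ℚ) • Jm) := by rw [Matrix.mul_assoc]
        _ = _ := by rw [hNi, Matrix.one_mul]
    have hentry := aux_entry_NTN b b D i j
    rw [← hNm, hNTN] at hentry
    have : (((D i ∩ D j).card : ℕ) : ℚ) = (lam : ℚ) := by
      rw [← hentry]
      simp [Matrix.one_apply, hij, hJm]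
    exact_mod_cast this
  · -- intersections lam → symmetric
    intro hint
    have hb2 : 2 ≤ b := by omega
    set i0 : Fin b := ⟨0, by omega⟩ with hi0
    set i1 : Fin b := ⟨1, by omega⟩ with hi1
    have hlamle : lam ≤ k := by
      have h1 := hint i0 i1 (by simp [hi0, hi1, Fin.ext_iff])
      rw [← h1, ← hsize i0]
      exact Finset.card_le_card Finset.inter_subset_left
    have hlamk : lam < k := by
      rcases lt_or_eq_of_le hlamle with h | h
      · exact h
      · exfalso
        -- lam = k: all blocks are equal
        have hall : ∀ j : Fin b, D j = D i0 := by
          intro j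
          by_cases hj : j = i0
          · rw [hj]
          · have hc := hint i0 j fun hh => hj hh.symm
            have hsub : D i0 ∩ D j ⊆ D i0 := Finset.inter_subset_left
            have heq : D i0 ∩ D j = D i0 :=
              Finset.eq_of_subset_of_card_le hsub (by rw [hc, hsize, ← h])
            have hsub2 : D i0 ⊆ D j := by
              rw [← heq]
              exact Finset.inter_subset_right
            exact (Finset.eq_of_subset_of_card_le hsub2 (by rw [hsize, hsize])).symm
        obtain ⟨p, hp⟩ : (D i0).Nonempty := by
          rw [← Finset.card_pos, hsize]; omega
        obtain ⟨q, hq⟩ : ∃ q : Fin v, q ∉ D i0 := by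
          by_contra hcon
          push_neg at hcon
          have : (Finset.univ : Finset (Fin v)).card ≤ (D i0).card :=
            Finset.card_le_card fun x _ => hcon x
          rw [hsize, Finset.card_univ, Fintype.card_fin] at this
          omega
        have hpq : p ≠ q := fun hh => hq (hh ▸ hp)
        have h0 := hpairs p q hpq
        have hempty : (Finset.univ.filter fun i => p ∈ D i ∧ q ∈ D i) = ∅ := by
          ext i
          simp only [Finset.mem_filter, Finset.mem_univ, true_and, Finset.notMem_empty,
            iff_false]
          intro hcon
          exact hq (hall i ▸ hcon.2)
        rw [hempty] at h0
        simp at h0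
        omega
    have hNTN : Nmᵀ * Nm = ((k:ℚ) - lam) • (1 : Matrix (Fin b) (Fin b) ℚ)
        + (lam:ℚ) • Matrix.of (fun _ _ => (1:ℚ)) := by
      ext i j
      rw [hNm, aux_entry_NTN]
      by_cases hij : i = j
      · subst hij
        rw [Finset.inter_self, hsize]
        simp [Matrix.one_apply]
      · rw [hint i j hij]
        simp [Matrix.one_apply, hij]
    have hUnit2 : IsUnit (Nmᵀ * Nm) := by
      rw [hNTN]
      apply aux_isUnit
      · have : (lam:ℚ) < k := by exact_mod_cast hlamk
        intro hcon
        nlinarith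
      · have h1 : (lam:ℚ) < k := by exact_mod_cast hlamk
        have h2 : (0:ℚ) ≤ (b:ℚ) * lam := by positivity
        nlinarith
    have hbv : b ≤ v := by
      have h1 : (Nmᵀ * Nm).rank = b := by
        rw [Matrix.rank_of_isUnit _ hUnit2, Fintype.card_fin]
      have h2 : (Nmᵀ * Nm).rank ≤ Nm.rank := Matrix.rank_mul_le_right _ _
      have h3 : Nm.rank ≤ v := by
        have := Matrix.rank_le_card_height Nm
        simpa using this
      omega
    omega
end

section
/- Let D be a non-trivial (v,k,λ)-design with λ > 0 and let G_D be the associated split graph (points form a clique, blocks an independent set, with point–block incidence edges). If G_D has diameter 3, then D is non-symmetric, i.e., b > v. -/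
/-- The split graph associated with a design: the points form a clique, the blocks
an independent set, and a point is adjacent to a block iff it lies in it. -/
def assocSplitGraph (v b : ℕ) (D : Fin b → Finset (Fin v)) :
    SimpleGraph (Fin v ⊕ Fin b) :=
  SimpleGraph.fromRel (fun x y =>
    match x, y with
    | Sum.inl _, Sum.inl _ => True
    | Sum.inl p, Sum.inr i => p ∈ D i
    | _, _ => False)

/-- From diameter `3`, there exist two disjoint blocks. -/
lemma exists_disjoint_blocks (v b k : ℕ) (hk : 2 ≤ k)
    (D : Fin b → Finset (Fin v))
    (hsize : ∀ i, (D i).card = k)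
    (hdiam : (assocSplitGraph v b D).diam = 3) :
    ∃ i j : Fin b, i ≠ j ∧ ∀ p, ¬(p ∈ D i ∧ p ∈ D j) := by
  classical
  set G := assocSplitGraph v b D with hG
  have adjPP : ∀ p q : Fin v, p ≠ q → G.Adj (.inl p) (.inl q) := by
    intro p q h
    simp [hG, assocSplitGraph, SimpleGraph.fromRel_adj, h]
  have adjPB : ∀ (p : Fin v) (i : Fin b), p ∈ D i → G.Adj (.inl p) (.inr i) := by
    intro p i h
    simp [hG, assocSplitGraph, SimpleGraph.fromRel_adj, h]
  by_contra hcon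
  push_neg at hcon
  have h2 : ∀ u w : Fin v ⊕ Fin b, G.edist u w ≤ 2 := by
    have pb : ∀ (p : Fin v) (i : Fin b), G.edist (.inl p) (.inr i) ≤ 2 := by
      intro p i
      by_cases hp : p ∈ D i
      · exact le_trans (SimpleGraph.edist_le (adjPB p i hp).toWalk) (by simp)
      · obtain ⟨q, hq⟩ : (D i).Nonempty := by
          rw [← Finset.card_pos, hsize]; omega
        have hpq : p ≠ q := fun h => hp (h ▸ hq)
        exact le_trans (SimpleGraph.edist_le
          (.cons (adjPP p q hpq) (.cons (adjPB q i hq) .nil))) (by simp)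
    rintro (p | i) (q | j)
    · by_cases h : p = q
      · simp [h]
      · exact le_trans (SimpleGraph.edist_le (adjPP p q h).toWalk) (by simp)
    · exact pb p j
    · rw [SimpleGraph.edist_comm]; exact pb q i
    · by_cases h : i = j
      · simp [h]
      · obtain ⟨p, hpi, hpj⟩ := hcon i j h
        exact le_trans (SimpleGraph.edist_le
          (.cons (adjPB p i hpi).symm (.cons (adjPB p j hpj) .nil))) (by simp)
  have : G.diam ≤ 2 := by
    have := SimpleGraph.ediam_le_of_edist_le h2
    have := ENat.toNat_le_toNat this (by simp)
    simpa [SimpleGraph.diam] using this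
  omega

open Matrix in
/-- Strict Fisher inequality in the presence of two disjoint blocks. -/
lemma fisher_strict (v b k lam r : ℕ) (hkv : k < v) (hv0 : 0 < v)
    (hlam : 0 < lam) (D : Fin b → Finset (Fin v))
    (hsize : ∀ i, (D i).card = k)
    (hpairs : ∀ p q : Fin v, p ≠ q →
      (Finset.univ.filter fun i => p ∈ D i ∧ q ∈ D i).card = lam)
    (hRconst : ∀ p : Fin v, (Finset.univ.filter fun i => p ∈ D i).card = r)
    (hrlam : lam < r)
    (hsum : v * r = b * k)
    (hdisj : ∃ i j : Fin b, i ≠ j ∧ ∀ p, ¬(p ∈ D i ∧ p ∈ D j)) :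
    v < b := by
  classical
  set N : Matrix (Fin v) (Fin b) ℚ :=
    Matrix.of (fun p i => if p ∈ D i then 1 else 0) with hN
  set J : Matrix (Fin v) (Fin v) ℚ := Matrix.of (fun _ _ => 1) with hJ
  set a : ℚ := (r : ℚ) - lam with ha
  have ha0 : 0 < a := by
    rw [ha]; rw [sub_pos]; exact_mod_cast hrlam
  set s : ℚ := a + lam * v with hs
  have hs0 : 0 < s := by
    have : (0:ℚ) ≤ (lam : ℚ) * v := by positivity
    rw [hs]; linarith
  -- entry computation
  have hNNT : N * Nᵀ = a • (1 : Matrix (Fin v) (Fin v) ℚ) + (lam : ℚ) • J := by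
    ext p q
    have hterm : ∀ i : Fin b, N p i * Nᵀ i q = if p ∈ D i ∧ q ∈ D i then 1 else 0 := by
      intro i
      simp only [hN, Matrix.transpose_apply, Matrix.of_apply]
      split_ifs with h1 h2 h3 h4 <;> simp_all
    rw [Matrix.mul_apply]
    simp_rw [hterm]
    rw [Finset.sum_boole]
    by_cases hpq : p = q
    · subst hpq
      have : (Finset.univ.filter fun i => p ∈ D i ∧ p ∈ D i)
          = (Finset.univ.filter fun i => p ∈ D i) := by simp
      rw [this, hRconst]
      simp [Matrix.one_apply, hJ, ha]
    · rw [hpairs p q hpq]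
      simp [Matrix.one_apply, hpq, hJ]
  have hJJ : J * J = (v : ℚ) • J := by
    ext p q; simp [hJ, Matrix.mul_apply]
  -- invertibility of N * Nᵀ
  have hunit : IsUnit (N * Nᵀ) := by
    rw [Matrix.isUnit_iff_isUnit_det]
    apply Matrix.isUnit_det_of_right_inverse
      (B := a⁻¹ • (1 : Matrix (Fin v) (Fin v) ℚ) + (-(lam / (a * s))) • J)
    rw [hNNT]
    simp only [Matrix.add_mul, Matrix.mul_add, Matrix.smul_mul, Matrix.mul_smul,
      Matrix.one_mul, Matrix.mul_one, hJJ, smul_smul]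
    have ha' : a ≠ 0 := ne_of_gt ha0
    have hs' : s ≠ 0 := ne_of_gt hs0
    match_scalars
    · field_simp
    · field_simp
      ring
  have hrank : v ≤ b := by
    have h1 : (N * Nᵀ).rank = v := by
      rw [Matrix.rank_of_isUnit _ hunit, Fintype.card_fin]
    calc v = (N * Nᵀ).rank := h1.symm
      _ ≤ N.rank := Matrix.rank_mul_le_left _ _
      _ ≤ Fintype.card (Fin b) := Matrix.rank_le_card_width N
      _ = b := Fintype.card_fin b
  by_contra hvb
  have hb : b = v := by omega
  have hrkk : r = k := by
    have : v * r = v * k := by rw [hsum, hb]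
    exact Nat.eq_of_mul_eq_mul_left hv0 this
  -- square matrix
  set e : Fin v ≃ Fin b := finCongr hb.symm with he
  set M : Matrix (Fin v) (Fin v) ℚ := N.submatrix id e with hM
  have hMMT : M * Mᵀ = N * Nᵀ := by
    ext p q
    rw [Matrix.mul_apply, Matrix.mul_apply]
    exact Equiv.sum_comp e (fun i => N p i * Nᵀ i q)
  have hMunit : IsUnit M := by
    rw [Matrix.isUnit_iff_isUnit_det]
    have h1 : IsUnit ((M * Mᵀ).det) :=
      (Matrix.isUnit_iff_isUnit_det _).mp (hMMT ▸ hunit)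
    rw [Matrix.det_mul, Matrix.det_transpose] at h1
    exact isUnit_of_mul_isUnit_left h1
  have hMJ : M * J = J * M := by
    ext p q
    rw [Matrix.mul_apply, Matrix.mul_apply]
    have hL : ∑ j, M p j * J j q = (r : ℚ) := by
      simp only [hM, hN, hJ, Matrix.submatrix_apply, Matrix.of_apply, mul_one, id_eq]
      rw [Equiv.sum_comp e (fun i => if p ∈ D i then (1:ℚ) else 0), Finset.sum_boole, hRconst]
    have hRh : ∑ j, J p j * M j q = (k : ℚ) := by
      simp only [hM, hN, hJ, Matrix.submatrix_apply, Matrix.of_apply, one_mul, id_eq]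
      rw [Finset.sum_boole]
      norm_cast
      rw [show (Finset.univ.filter fun x => x ∈ D (e q)) = D (e q) by ext t; simp]
      exact hsize (e q)
    rw [hL, hRh, hrkk]
  -- dual identity
  obtain ⟨B, hBM⟩ := hMunit.exists_left_inv
  have hMTM : Mᵀ * M = a • (1 : Matrix (Fin v) (Fin v) ℚ) + (lam : ℚ) • J := by
    have h1 : Mᵀ * M = B * ((M * Mᵀ) * M) := by
      rw [← Matrix.mul_assoc, ← Matrix.mul_assoc, hBM, Matrix.one_mul]
    rw [h1, hMMT, hNNT]
    rw [Matrix.add_mul, Matrix.smul_mul, Matrix.smul_mul, Matrix.one_mul,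
      ← hMJ, Matrix.mul_add, Matrix.mul_smul, Matrix.mul_smul,
      ← Matrix.mul_assoc, hBM, Matrix.one_mul]
  -- contradiction with disjoint blocks
  obtain ⟨i, j, hij, hdis⟩ := hdisj
  have hzero : (Mᵀ * M) (e.symm i) (e.symm j) = 0 := by
    rw [Matrix.mul_apply]
    apply Finset.sum_eq_zero
    intro p _
    simp only [hM, hN, Matrix.transpose_apply, Matrix.submatrix_apply, Matrix.of_apply, id_eq,
      Equiv.apply_symm_apply]
    by_cases h1 : p ∈ D i
    · rw [if_neg (fun h2 => hdis p ⟨h1, h2⟩), mul_zero]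
    · rw [if_neg h1, zero_mul]
  rw [hMTM] at hzero
  have hne : e.symm i ≠ e.symm j := fun h => hij (e.symm.injective h)
  simp only [Matrix.add_apply, Matrix.smul_apply, Matrix.one_apply, if_neg hne,
    hJ, Matrix.of_apply, smul_eq_mul, mul_zero, mul_one, zero_add] at hzero
  exact absurd hzero (by exact_mod_cast hlam.ne')

/-- If the split graph associated with a non-trivial `(v,k,λ)`-design has diameter `3`,
then the design is non-symmetric: `b > v`. -/
theorem diam_three_nonsymmetric (v b k lam : ℕ) (hk : 2 ≤ k) (hkv : k < v)
    (hlam : 0 < lam) (D : Fin b → Finset (Fin v))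
    (hsize : ∀ i, (D i).card = k)
    (hpairs : ∀ p q : Fin v, p ≠ q →
      (Finset.univ.filter fun i => p ∈ D i ∧ q ∈ D i).card = lam)
    (hdiam : (assocSplitGraph v b D).diam = 3) :
    v < b := by
  classical
  have hv0 : 0 < v := by omega
  -- the replication number is constant
  have hrep : ∀ p : Fin v, (Finset.univ.filter fun i => p ∈ D i).card * (k-1)
      = lam * (v-1) := by
    intro p
    have lhs : ∑ q ∈ Finset.univ.erase p,
        (Finset.univ.filter fun i => p ∈ D i ∧ q ∈ D i).card = lam * (v-1) := by
      rw [Finset.sum_congr rfl (fun q hq =>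
        hpairs p q (Finset.ne_of_mem_erase hq).symm), Finset.sum_const,
        Finset.card_erase_of_mem (Finset.mem_univ p), Finset.card_univ,
        Fintype.card_fin, smul_eq_mul, mul_comm]
    have swap : ∑ q ∈ Finset.univ.erase p,
        (Finset.univ.filter fun i => p ∈ D i ∧ q ∈ D i).card
        = ∑ i : Fin b, ((Finset.univ.erase p).filter fun q => p ∈ D i ∧ q ∈ D i).card := by
      simp_rw [Finset.card_filter]
      exact Finset.sum_comm
    have inner : ∀ i, ((Finset.univ.erase p).filter fun q => p ∈ D i ∧ q ∈ D i).card
        = if p ∈ D i then k - 1 else 0 := by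
      intro i
      by_cases hp : p ∈ D i
      · rw [if_pos hp]
        have : ((Finset.univ.erase p).filter fun q => p ∈ D i ∧ q ∈ D i)
            = (D i).erase p := by
          ext q; simp [hp, Finset.mem_erase, and_comm]
        rw [this, Finset.card_erase_of_mem hp, hsize]
      · simp [hp]
    have rhs : ∑ i : Fin b, ((Finset.univ.erase p).filter fun q => p ∈ D i ∧ q ∈ D i).card
        = (Finset.univ.filter fun i => p ∈ D i).card * (k - 1) := by
      simp_rw [inner]
      rw [← Finset.sum_filter, Finset.sum_const, smul_eq_mul]
    rw [← rhs, ← swap, lhs]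
  obtain ⟨p0⟩ : Nonempty (Fin v) := ⟨⟨0, by omega⟩⟩
  set r := (Finset.univ.filter fun i => p0 ∈ D i).card with hr
  have hRconst : ∀ p : Fin v, (Finset.univ.filter fun i => p ∈ D i).card = r :=
    fun p => Nat.eq_of_mul_eq_mul_right (by omega) ((hrep p).trans (hrep p0).symm)
  have hrk : r * (k-1) = lam * (v-1) := hrep p0
  have hrlam : lam < r := by
    by_contra h
    push_neg at h
    have h1 : r * (k-1) ≤ lam * (k-1) := Nat.mul_le_mul_right _ h
    have h2 : lam * (k-1) < lam * (v-1) := (Nat.mul_lt_mul_left hlam).mpr (by omega)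
    omega
  have hsum : v * r = b * k := by
    have h1 : ∑ p : Fin v, (Finset.univ.filter fun i => p ∈ D i).card = v * r := by
      rw [Finset.sum_congr rfl (fun p _ => hRconst p), Finset.sum_const,
        Finset.card_univ, Fintype.card_fin, smul_eq_mul]
    have h2 : ∑ p : Fin v, (Finset.univ.filter fun i => p ∈ D i).card = b * k := by
      simp_rw [Finset.card_filter]
      rw [Finset.sum_comm]
      have : ∀ i : Fin b, (∑ p : Fin v, if p ∈ D i then 1 else 0) = k := by
        intro i
        rw [← Finset.card_filter]
        rw [show (Finset.univ.filter fun p => p ∈ D i) = D i by ext q; simp]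
        exact hsize i
      simp_rw [this, Finset.sum_const, Finset.card_univ, Fintype.card_fin, smul_eq_mul]
    omega
  exact fisher_strict v b k lam r hkv hv0 hlam D hsize hpairs hRconst hrlam hsum
    (exists_disjoint_blocks v b k hk D hsize hdiam)
end

section
/- Let G be a connected split graph with clique C of size c and independent set S of size s such that all vertices in C have the same degree and all vertices in S have degree k, with k' = sk/c the number of neighbours in S of each clique vertex. Then the rank of the adjacency matrix A(G) satisfies rank(A) = c + rank(B) ≤ 2c, where B is the c×s biadjacency matrix between C and S. -/
open Matrix

/-- Key kernel computation: if `(J-I)x + By = 0` and `Bᵀx = 0`, with constant row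
sums `k'` and column sums `k`, and (`B = 0` or `k' ≠ 0`), then `x = 0` and `By = 0`. -/
lemma bidegreed_key {c s : ℕ} (hc : 2 ≤ c) (k k' : ℝ)
    (B : Matrix (Fin c) (Fin s) ℝ)
    (hrow : ∀ i, ∑ j, B i j = k')
    (hcol : ∀ j, ∑ i, B i j = k)
    (hB : B = 0 ∨ k' ≠ 0)
    (x : Fin c → ℝ) (y : Fin s → ℝ)
    (h1 : ∀ i, (∑ i', x i') - x i + (B *ᵥ y) i = 0)
    (h2 : Bᵀ *ᵥ x = 0) :
    x = 0 ∧ B *ᵥ y = 0 := by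
  set t : ℝ := ∑ i', x i' with ht
  rcases hB with hB | hk'
  · subst hB
    have hz : (0 : Matrix (Fin c) (Fin s) ℝ) *ᵥ y = 0 := zero_mulVec y
    refine ⟨?_, hz⟩
    have hx : ∀ i, x i = t := by
      intro i
      have := h1 i
      rw [hz] at this
      simp at this
      linarith [this]
    have hts : t = (c : ℝ) * t := by
      rw [ht]
      conv_lhs => rw [Finset.sum_congr rfl (fun i _ => hx i)]
      simp [mul_comm]; exact Or.inl ht
    have hc1 : (c : ℝ) ≠ 1 := by
      have : (2 : ℝ) ≤ (c : ℝ) := by exact_mod_cast hc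
      linarith
    have ht0 : t = 0 := by
      rcases mul_eq_zero.mp (show ((c : ℝ) - 1) * t = 0 by ring_nf; linarith [hts]) with h | h
      · exact absurd (by linarith [h] : (c : ℝ) = 1) hc1
      · exact h
    funext i; simp [hx i, ht0]
  · -- main case: k' ≠ 0
    set u : Fin c → ℝ := B *ᵥ y with hu
    have hui : ∀ i, u i = x i - t := by
      intro i; have := h1 i; linarith
    -- Bᵀ *ᵥ u = -(t*k) everywhere
    have hBtu : ∀ j, (Bᵀ *ᵥ u) j = -(t * k) := by
      intro j
      have : (Bᵀ *ᵥ u) j = ∑ i, B i j * (x i - t) := by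
        simp [Matrix.mulVec, dotProduct, Matrix.transpose_apply, hui]
      rw [this]
      have : ∑ i, B i j * (x i - t) = (∑ i, B i j * x i) - t * (∑ i, B i j) := by
        rw [Finset.mul_sum, ← Finset.sum_sub_distrib]
        congr 1; funext i; ring
      rw [this, hcol j]
      have hx0 : ∑ i, B i j * x i = 0 := by
        have := congrFun h2 j
        simpa [Matrix.mulVec, dotProduct, Matrix.transpose_apply] using this
      rw [hx0]; ring
    -- define z = k' • y + t • 1
    set z : Fin s → ℝ := fun j => k' * y j + t with hz
    have hBz : ∀ i, (B *ᵥ z) i = k' * u i + t * k' := by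
      intro i
      have : (B *ᵥ z) i = ∑ j, B i j * (k' * y j + t) := by
        simp [Matrix.mulVec, dotProduct, hz]
      rw [this]
      have : ∑ j, B i j * (k' * y j + t) = k' * (∑ j, B i j * y j) + t * (∑ j, B i j) := by
        rw [Finset.mul_sum, Finset.mul_sum, ← Finset.sum_add_distrib]
        congr 1; funext j; ring
      rw [this, hrow i]
      simp [hu, Matrix.mulVec, dotProduct]
    have hBtBz : Bᵀ *ᵥ (B *ᵥ z) = 0 := by
      funext j
      have step : (Bᵀ *ᵥ (B *ᵥ z)) j = ∑ i, B i j * (k' * u i + t * k') := by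
        show ∑ i, Bᵀ j i * (B *ᵥ z) i = _
        refine Finset.sum_congr rfl (fun i _ => ?_)
        rw [Matrix.transpose_apply, hBz i]
      rw [step]
      have expand : ∑ i, B i j * (k' * u i + t * k') =
          k' * (∑ i, B i j * u i) + (t * k') * (∑ i, B i j) := by
        rw [Finset.mul_sum, Finset.mul_sum, ← Finset.sum_add_distrib]
        congr 1; funext i; ring
      have hBu : ∑ i, B i j * u i = -(t * k) := by
        have := hBtu j
        simpa [Matrix.mulVec, dotProduct, Matrix.transpose_apply] using this
      rw [expand, hBu, hcol j]
      simp; ring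
    have hBz0 : B *ᵥ z = 0 := by
      have hdot : (B *ᵥ z) ⬝ᵥ (B *ᵥ z) = 0 := by
        have : z ⬝ᵥ (Bᵀ *ᵥ (B *ᵥ z)) = (B *ᵥ z) ⬝ᵥ (B *ᵥ z) := by
          rw [Matrix.dotProduct_mulVec, Matrix.vecMul_transpose]
        rw [← this, hBtBz, dotProduct_zero]
      exact dotProduct_self_eq_zero.mp hdot
    have hun : ∀ i, u i = -t := by
      intro i
      have h0 : k' * u i + t * k' = 0 := by
        rw [← hBz i]
        simpa using congrFun hBz0 i
      have h0' : k' * (u i + t) = 0 := by linear_combination h0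
      rcases mul_eq_zero.mp h0' with h | h
      · exact absurd h hk'
      · linarith
    have hx0 : ∀ i, x i = 0 := by
      intro i; have h := hui i; rw [hun i] at h; linarith
    have ht0 : t = 0 := by rw [ht]; exact Finset.sum_eq_zero (fun i _ => hx0 i)
    constructor
    · funext i; exact hx0 i
    · funext i
      show u i = (0 : Fin c → ℝ) i
      rw [hun i, ht0, Pi.zero_apply, neg_zero]
  


/-- For a connected bidegreed split graph with clique of size `c` and independent set
of size `s`, whose adjacency matrix is `A = [[J - I, B],[Bᵀ, 0]]` with `B` the `c × s`
biadjacency matrix (row sums `k'`, column sums `k`, `k' c = k s`), one has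
`rank A = c + rank B ≤ 2c`.  Connectivity is expressed as irreducibility of `A`. -/
theorem bidegreed_split_rank (c s k k' : ℕ) (hc : 2 ≤ c)
    (B : Matrix (Fin c) (Fin s) ℝ)
    (h01 : ∀ i j, B i j = 0 ∨ B i j = 1)
    (hrow : ∀ i, ∑ j, B i j = (k' : ℝ))
    (hcol : ∀ j, ∑ i, B i j = (k : ℝ))
    (hkk : k' * c = k * s)
    (A : Matrix (Fin c ⊕ Fin s) (Fin c ⊕ Fin s) ℝ)
    (hA : A = Matrix.fromBlocks
      (Matrix.of (fun _ _ : Fin c => (1 : ℝ)) - 1) B B.transpose 0)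
    (hconn : ¬ ∃ S : Set (Fin c ⊕ Fin s), S.Nonempty ∧ Sᶜ.Nonempty ∧
      ∀ i ∈ S, ∀ j ∈ Sᶜ, A i j = 0) :
    A.rank = c + B.rank ∧ A.rank ≤ 2 * c := by
  classical
  -- Either B = 0 or k' ≠ 0 (entries are 0/1, rows sum to k')
  have hB0 : B = 0 ∨ ((k' : ℝ)) ≠ 0 := by
    by_cases hk' : (k' : ℝ) = 0
    · left
      funext i j
      have hs := hrow i
      rw [hk'] at hs
      have hnn : ∀ j' ∈ Finset.univ, (0:ℝ) ≤ B i j' := fun j' _ => by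
        rcases h01 i j' with h | h <;> simp [h]
      have := (Finset.sum_eq_zero_iff_of_nonneg hnn).mp hs j (Finset.mem_univ j)
      simpa using this
    · right; exact hk'
  -- kernel characterization
  have hker : ∀ v : (Fin c ⊕ Fin s) → ℝ, A *ᵥ v = 0 ↔
      ((∀ i, v (Sum.inl i) = 0) ∧ B *ᵥ (v ∘ Sum.inr) = 0) := by
    intro v
    rw [hA, ← Sum.elim_comp_inl_inr v, Matrix.fromBlocks_mulVec]
    set x : Fin c → ℝ := (Sum.elim (v ∘ Sum.inl) (v ∘ Sum.inr)) ∘ Sum.inl with hx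
    set y : Fin s → ℝ := (Sum.elim (v ∘ Sum.inl) (v ∘ Sum.inr)) ∘ Sum.inr with hy
    have hxv : x = v ∘ Sum.inl := by funext i; simp [hx]
    have hyv : y = v ∘ Sum.inr := by funext j; simp [hy]
    constructor
    · intro hv
      have h2 : Bᵀ *ᵥ x = 0 := by
        funext j
        have := congrFun hv (Sum.inr j)
        simpa [Matrix.zero_mulVec] using this
      have h1 : ∀ i, (∑ i', x i') - x i + (B *ᵥ y) i = 0 := by
        intro i
        have := congrFun hv (Sum.inl i)
        simp only [Sum.elim_inl, Pi.add_apply] at this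
        rw [Matrix.sub_mulVec, Matrix.one_mulVec] at this
        have hof : ((Matrix.of (fun _ _ : Fin c => (1:ℝ))) *ᵥ x) i = ∑ i', x i' := by
          simp [Matrix.mulVec, dotProduct]
        rw [Pi.sub_apply, hof] at this
        exact this
      obtain ⟨hx0, hy0⟩ := bidegreed_key hc (k : ℝ) (k' : ℝ) B hrow hcol hB0 x y h1 h2
      constructor
      · intro i
        have := congrFun hx0 i
        rw [hxv] at this
        simpa using this
      · exact hy0
    · rintro ⟨hx0, hy0⟩
      have hxz : x = 0 := by funext i; rw [hxv]; exact hx0 i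
      have hyz : B *ᵥ y = 0 := by rw [hyv]; exact hy0
      funext w
      cases w with
      | inl i =>
        simp only [Sum.elim_inl, Pi.add_apply, hxz, Matrix.mulVec_zero, hyz]
        simp
      | inr j =>
        simp only [Sum.elim_inr, Pi.add_apply, hxz, Matrix.mulVec_zero, Matrix.zero_mulVec]
        simp
  -- linear equivalence of kernels
  have e : LinearMap.ker A.mulVecLin ≃ₗ[ℝ] LinearMap.ker B.mulVecLin :=
    { toFun := fun v => ⟨fun j => v.1 (Sum.inr j), by
        have hv : A *ᵥ v.1 = 0 := by
          rw [← Matrix.mulVecLin_apply]; exact v.2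
        have := ((hker v.1).mp hv).2
        rw [LinearMap.mem_ker, Matrix.mulVecLin_apply]
        exact this⟩
      map_add' := fun a b => rfl
      map_smul' := fun r a => rfl
      invFun := fun y => ⟨Sum.elim 0 y.1, by
        rw [LinearMap.mem_ker, Matrix.mulVecLin_apply]
        refine (hker _).mpr ⟨fun i => rfl, ?_⟩
        rw [← Matrix.mulVecLin_apply]; exact y.2⟩
      left_inv := fun v => by
        apply Subtype.ext
        funext w
        cases w with
        | inl i =>
          have hv : A *ᵥ v.1 = 0 := by
            rw [← Matrix.mulVecLin_apply]; exact v.2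
          exact (((hker v.1).mp hv).1 i).symm
        | inr j => rfl
      right_inv := fun y => by apply Subtype.ext; rfl }
  have hkd : Module.finrank ℝ (LinearMap.ker A.mulVecLin)
      = Module.finrank ℝ (LinearMap.ker B.mulVecLin) := LinearEquiv.finrank_eq e
  have rnA := LinearMap.finrank_range_add_finrank_ker A.mulVecLin
  have rnB := LinearMap.finrank_range_add_finrank_ker B.mulVecLin
  rw [Module.finrank_pi] at rnA rnB
  have hcardA : Fintype.card (Fin c ⊕ Fin s) = c + s := by simp
  have hcardB : Fintype.card (Fin s) = s := by simp
  rw [hcardA] at rnA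
  rw [hcardB] at rnB
  have hrA : A.rank = Module.finrank ℝ (LinearMap.range A.mulVecLin) := rfl
  have hrB : B.rank = Module.finrank ℝ (LinearMap.range B.mulVecLin) := rfl
  have hBc : B.rank ≤ c := by
    have := Matrix.rank_le_card_height B
    simpa using this
  refine ⟨?_, ?_⟩ <;> omega
end
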